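/- If C₀ is a positive definite trace-class operator on a separable Hilbert space X and W : X → X is a bounded self-adjoint positive finite-rank operator, then the operator C₀^{-1/2} W C₀^{-1/2} (defined on the range of C₀^{1/2}, extended appropriately) is Hilbert–Schmidt. -/

import Mathlib

open scoped RealInnerProductSpace

/-- `T` is a Hilbert–Schmidt operator: for every Hilbert basis the squared norms of the
images of the basis vectors are summable (this is basis-independent). -/
def IsHilbertSchmidt {X : Type*} [NormedAddCommGroup X] [InnerProductSpace ℝ X]
    (T : X →L[ℝ] X) : Prop :=
  ∀ ⦃ι : Type⦄ (b : HilbertBasis ι ℝ X), Summable fun i => ‖T (b i)‖ ^ 2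

/-!
Since `S = C₀^{1/2}` is injective, `S (T S) = W` identifies the range of `T S` with that of `W`,
so `T S` has finite rank. As `S` is self-adjoint and injective, its range is dense, hence the
range of `T` lies in the closure of the range of `T S`, a finite-dimensional and therefore closed
subspace. Finally, a finite-rank operator is Hilbert–Schmidt: if `(u k)` is an orthonormal basis
of its range, then `‖T x‖² = ∑ k, ⟪x, T† (u k)⟫²`, and each term is summable over any Hilbert
basis by Parseval.
-/

theorem LinearMap.finite_range_of_injective_comp {R M N P : Type*} [Semiring R]
    [AddCommMonoid M] [AddCommMonoid N] [AddCommMonoid P] [Module R M] [Module R N] [Module R P]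
    (A : M →ₗ[R] N) {S : N →ₗ[R] P} (hS : Function.Injective S)
    (hfin : Module.Finite R (range (S ∘ₗ A))) : Module.Finite R (range A) := by
  rw [range_comp] at hfin
  exact Module.Finite.equiv (Submodule.equivMapOfInjective S hS _).symm

theorem ContinuousLinearMap.range_le_range_comp_of_denseRange {R D E F : Type*} [Semiring R]
    [TopologicalSpace D] [AddCommMonoid D] [Module R D]
    [TopologicalSpace E] [AddCommMonoid E] [Module R E]
    [TopologicalSpace F] [AddCommMonoid F] [Module R F]
    {T : E →L[R] F} {S : D →L[R] E} (hS : DenseRange S)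
    (hclosed : IsClosed (LinearMap.range (T ∘L S : D →ₗ[R] F) : Set F)) :
    LinearMap.range (T : E →ₗ[R] F) ≤ LinearMap.range (T ∘L S : D →ₗ[R] F) := by
  have hsub := T.continuous.range_subset_closure_image_dense hS
  rw [← Set.range_comp] at hsub
  exact fun y hy => hclosed.closure_subset (hsub hy)

theorem IsSelfAdjoint.denseRange_of_injective {𝕜 E : Type*} [RCLike 𝕜] [NormedAddCommGroup E]
    [InnerProductSpace 𝕜 E] [CompleteSpace E] {S : E →L[𝕜] E} (hS : IsSelfAdjoint S)
    (hinj : Function.Injective S) : DenseRange S := by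
  have hperp : (LinearMap.range (S : E →ₗ[𝕜] E))ᗮ = ⊥ := by
    rw [hS.isSymmetric.orthogonal_range, LinearMap.ker_eq_bot]
    exact hinj
  exact Submodule.dense_iff_topologicalClosure_eq_top.mpr
    (Submodule.topologicalClosure_eq_top_iff.mpr hperp)

theorem isHilbertSchmidt_of_finiteDimensional_range {X : Type*} [NormedAddCommGroup X]
    [InnerProductSpace ℝ X] [CompleteSpace X] (T : X →L[ℝ] X)
    [FiniteDimensional ℝ (LinearMap.range (T : X →ₗ[ℝ] X))] : IsHilbertSchmidt T := by
  intro ι b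
  let u := stdOrthonormalBasis ℝ (LinearMap.range (T : X →ₗ[ℝ] X))
  have hnorm : ∀ x, ‖T x‖ ^ 2 = ∑ k, ⟪x, T.adjoint (u k)⟫ ^ 2 := fun x => by
    have hparseval := u.sum_sq_inner_left ⟨T x, LinearMap.mem_range_self _ x⟩
    simp only [Submodule.coe_inner, Submodule.coe_norm] at hparseval
    simp only [← hparseval, ContinuousLinearMap.adjoint_inner_right]
  simp only [hnorm]
  refine summable_sum fun k _ => ?_
  simpa only [sq, real_inner_comm] using
    b.summable_inner_mul_inner (T.adjoint (u k)) (T.adjoint (u k))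

theorem stmt0_general {X : Type} [NormedAddCommGroup X] [InnerProductSpace ℝ X] [CompleteSpace X]
    (C₀ S W T : X →L[ℝ] X)
    (hC₀inj : Function.Injective C₀)
    (hSsa : IsSelfAdjoint S) (hS : S ∘L S = C₀)
    (hWfr : FiniteDimensional ℝ (LinearMap.range (W : X →ₗ[ℝ] X)))
    (hT : S ∘L T ∘L S = W) :
    IsHilbertSchmidt T := by
  have hSinj : Function.Injective S := by
    subst hS
    exact Function.Injective.of_comp (f := S) hC₀inj
  subst hT
  have : FiniteDimensional ℝ (LinearMap.range (T ∘L S : X →ₗ[ℝ] X)) :=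
    LinearMap.finite_range_of_injective_comp _ hSinj hWfr
  have hrange := T.range_le_range_comp_of_denseRange (hSsa.denseRange_of_injective hSinj)
    (Submodule.closed_of_finiteDimensional _)
  have : FiniteDimensional ℝ (LinearMap.range (T : X →ₗ[ℝ] X)) :=
    Submodule.finiteDimensional_of_le hrange
  exact isHilbertSchmidt_of_finiteDimensional_range T

/-- If `C₀` is a positive definite trace-class operator on a separable Hilbert space `X`
(separability and the trace-class property are encoded by the Hilbert basis `b` indexed
by `ℕ` with summable diagonal of `C₀`), `S = C₀^{1/2}` is its positive square root, `W`
is a bounded self-adjoint positive finite-rank operator, and `T` is the bounded operator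
with `S T S = W` (i.e. `T` is the appropriate extension of `C₀^{-1/2} W C₀^{-1/2}`), then
`T` is Hilbert–Schmidt. -/
theorem stmt0 {X : Type} [NormedAddCommGroup X] [InnerProductSpace ℝ X] [CompleteSpace X]
    (C₀ S W T : X →L[ℝ] X)
    (hC₀sa : IsSelfAdjoint C₀) (hC₀pos : ∀ x, 0 ≤ ⟪C₀ x, x⟫) (hC₀inj : Function.Injective C₀)
    (b : HilbertBasis ℕ ℝ X) (htrace : Summable fun i => ⟪C₀ (b i), b i⟫)
    (hSsa : IsSelfAdjoint S) (hSpos : ∀ x, 0 ≤ ⟪S x, x⟫) (hS : S ∘L S = C₀)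
    (hWsa : IsSelfAdjoint W) (hWpos : ∀ x, 0 ≤ ⟪W x, x⟫)
    (hWfr : FiniteDimensional ℝ (LinearMap.range (W : X →ₗ[ℝ] X)))
    (hT : S ∘L T ∘L S = W) :
    IsHilbertSchmidt T :=
  stmt0_general C₀ S W T hC₀inj hSsa hS hWfr hT
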